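/- Suppose A belongs to the class 𝒜, X is a Banach lattice which is an AL-space, and Φ satisfies condition δ2 and condition (*). Then the Banach lattice l_Φ^A(X) (with coordinatewise order) is uniformly monotone: for every ε > 0 there exists μ > 0 such that for all x̄, ȳ ∈ l_Φ^A(X) with x̄ ≥ 0, ȳ ≥ 0, ‖x̄‖_Φ^A = 1 and ‖ȳ‖_Φ^A ≥ ε, one has ‖x̄ + ȳ‖_Φ^A ≥ 1 + μ. -/

import Mathlib

/-!
Additivity of the norm of `X` on positive elements makes the row sums of `x + y` the sums of
those of `x` and `y`, so by superadditivity of each `φ n` the modular of `(x + y) / σ` dominates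
the modular of `x / σ` plus that of `y / σ`. By δ₂, `‖y‖ ≥ ε` forces the modular of `y / 2` to
exceed a fixed `η > 0` on some finite set of rows. Hence an admissible `σ ≤ 2` for `x + y`
leaves the modular of `x / σ` below `1 - η`, and condition (*) with δ₂ then allows a fixed
dilation `(1 + μ) x / σ` with modular at most `1`, i.e. `1 = ‖x‖ ≤ σ / (1 + μ)`: `σ` cannot be
smaller than `1 + μ`.
-/

open Filter Topology

/-- An Orlicz function: convex, nondecreasing, continuous on `[0,∞)`,
vanishing at `0`, positive on `(0,∞)`, tending to `∞` at `∞`. -/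
structure IsOrliczFn (φ : ℝ → ℝ) : Prop where
  convexOn : ConvexOn ℝ (Set.Ici (0 : ℝ)) φ
  monotoneOn : MonotoneOn φ (Set.Ici (0 : ℝ))
  continuousOn : ContinuousOn φ (Set.Ici (0 : ℝ))
  map_zero : φ 0 = 0
  pos : ∀ t : ℝ, 0 < t → 0 < φ t
  tendsto_atTop : Filter.Tendsto φ Filter.atTop Filter.atTop

/-- A Musielak-Orlicz function: a sequence of Orlicz functions. -/
def IsMusielakOrlicz (Φ : ℕ → ℝ → ℝ) : Prop := ∀ n, IsOrliczFn (Φ n)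

/-- Condition δ₂ for a Musielak-Orlicz function. -/
def MOCondDelta2 (Φ : ℕ → ℝ → ℝ) : Prop :=
  ∃ K > (0 : ℝ), ∃ δ > (0 : ℝ), ∃ c : ℕ → ℝ, (∀ n, 0 ≤ c n) ∧ Summable c ∧
    ∀ n : ℕ, ∀ x : ℝ, 0 ≤ x → Φ n x ≤ δ → Φ n (2 * x) ≤ K * Φ n x + c n

/-- Condition (*) for a Musielak-Orlicz function. -/
def MOCondStar (Φ : ℕ → ℝ → ℝ) : Prop :=
  ∀ ε : ℝ, ε ∈ Set.Ioo (0 : ℝ) 1 → ∃ δ > (0 : ℝ), ∀ n : ℕ, ∀ u : ℝ, 0 ≤ u →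
    Φ n u < 1 - ε → Φ n ((1 + δ) * u) ≤ 1

/-- The class 𝒜 of infinite matrices: every column is nonzero. -/
def MatrixClassA (a : ℕ → ℕ → ℝ) : Prop := ∀ k, ∃ n, a n k ≠ 0

/-- A triangle matrix: nonzero diagonal, zero above the diagonal. -/
def IsTriangle (a : ℕ → ℕ → ℝ) : Prop := (∀ n, a n n ≠ 0) ∧ ∀ n k, n < k → a n k = 0

/-- The `n`-th row sum `∑_k |a_{nk}| ‖x_k‖`. -/
noncomputable def rowSum {X : Type*} [NormedAddCommGroup X]
    (a : ℕ → ℕ → ℝ) (x : ℕ → X) (n : ℕ) : ℝ :=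
  ∑' k, |a n k| * ‖x k‖

/-- Membership in the generalized Musielak-Orlicz sequence space `l_Φ^A(X)`:
`x` is a bounded sequence whose row sums are finite and
`∑_n φ_n(rowSum_n / σ) < ∞` for some `σ > 0`. -/
def MemL {X : Type*} [NormedAddCommGroup X]
    (Φ : ℕ → ℝ → ℝ) (a : ℕ → ℕ → ℝ) (x : ℕ → X) : Prop :=
  (∃ C : ℝ, ∀ k, ‖x k‖ ≤ C) ∧ (∀ n, Summable fun k => |a n k| * ‖x k‖) ∧
    ∃ σ > (0 : ℝ), Summable fun n => Φ n (rowSum a x n / σ)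

/-- Membership in `h_Φ^A(X)`: as `MemL` but for every `σ > 0`. -/
def MemH {X : Type*} [NormedAddCommGroup X]
    (Φ : ℕ → ℝ → ℝ) (a : ℕ → ℕ → ℝ) (x : ℕ → X) : Prop :=
  (∃ C : ℝ, ∀ k, ‖x k‖ ≤ C) ∧ (∀ n, Summable fun k => |a n k| * ‖x k‖) ∧
    ∀ σ > (0 : ℝ), Summable fun n => Φ n (rowSum a x n / σ)

/-- The Luxemburg-type norm `‖x‖_Φ^A`. -/
noncomputable def ANorm {X : Type*} [NormedAddCommGroup X]
    (Φ : ℕ → ℝ → ℝ) (a : ℕ → ℕ → ℝ) (x : ℕ → X) : ℝ :=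
  sInf {σ : ℝ | 0 < σ ∧ (Summable fun n => Φ n (rowSum a x n / σ)) ∧
    (∑' n, Φ n (rowSum a x n / σ)) ≤ 1}

/-- The modular `ρ_Φ^A(x) = ∑_n φ_n(∑_k |a_{nk}| ‖x_k‖)`. -/
noncomputable def rhoA {X : Type*} [NormedAddCommGroup X]
    (Φ : ℕ → ℝ → ℝ) (a : ℕ → ℕ → ℝ) (x : ℕ → X) : ℝ :=
  ∑' n, Φ n (rowSum a x n)

/-- The `m`-th section of a sequence: first `m` coordinates kept, rest zero. -/
def sect {X : Type*} [Zero X] (x : ℕ → X) (m : ℕ) : ℕ → X :=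
  fun k => if k < m then x k else 0

namespace IsOrliczFn

variable {φ : ℝ → ℝ}

lemma nonneg (h : IsOrliczFn φ) {u : ℝ} (hu : 0 ≤ u) : 0 ≤ φ u := by
  simpa [h.map_zero] using h.monotoneOn Set.self_mem_Ici hu hu

lemma mono (h : IsOrliczFn φ) {u v : ℝ} (hu : 0 ≤ u) (huv : u ≤ v) : φ u ≤ φ v :=
  h.monotoneOn hu (hu.trans huv) huv

lemma map_mul_le (h : IsOrliczFn φ) {t x : ℝ} (ht0 : 0 ≤ t) (ht1 : t ≤ 1) (hx : 0 ≤ x) :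
    φ (t * x) ≤ t * φ x := by
  simpa [h.map_zero] using
    h.convexOn.2 Set.self_mem_Ici (Set.mem_Ici.2 hx) (sub_nonneg.2 ht1) ht0 (by ring)

lemma add_le_map_add (h : IsOrliczFn φ) {u v : ℝ} (hu : 0 ≤ u) (hv : 0 ≤ v) :
    φ u + φ v ≤ φ (u + v) := by
  rcases (add_nonneg hu hv).eq_or_lt with h0 | h0
  · obtain ⟨rfl, rfl⟩ : u = 0 ∧ v = 0 := ⟨by linarith, by linarith⟩
    simp [h.map_zero]
  have key : ∀ w, 0 ≤ w → w ≤ u + v → φ w ≤ w / (u + v) * φ (u + v) := fun w hw hwuv => by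
    simpa [div_mul_cancel₀ _ h0.ne'] using
      h.map_mul_le (div_nonneg hw h0.le) ((div_le_one h0).2 hwuv) h0.le
  calc φ u + φ v ≤ u / (u + v) * φ (u + v) + v / (u + v) * φ (u + v) :=
        add_le_add (key u hu (by linarith)) (key v hv (by linarith))
    _ = φ (u + v) := by field_simp

lemma map_add_div_add_le (h : IsOrliczFn φ) {u v s t : ℝ} (hu : 0 ≤ u) (hv : 0 ≤ v)
    (hs : 0 < s) (ht : 0 < t) :
    φ ((u + v) / (s + t)) ≤ s / (s + t) * φ (u / s) + t / (s + t) * φ (v / t) := by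
  have hc := h.convexOn.2 (Set.mem_Ici.2 (div_nonneg hu hs.le))
    (Set.mem_Ici.2 (div_nonneg hv ht.le)) (by positivity : 0 ≤ s / (s + t))
    (by positivity : 0 ≤ t / (s + t)) (by field_simp)
  have heq : s / (s + t) * (u / s) + t / (s + t) * (v / t) = (u + v) / (s + t) := by
    field_simp
  simp only [smul_eq_mul] at hc
  rwa [heq] at hc

lemma map_one_add_mul_le (h : IsOrliczFn φ) {x μ δ : ℝ} (hx : 0 ≤ x) (hδ : 0 < δ)
    (hμ : 0 ≤ μ) (hμδ : μ ≤ δ) :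
    φ ((1 + μ) * x) ≤ φ x + μ / δ * φ ((1 + δ) * x) := by
  have hc := h.convexOn.2 (Set.mem_Ici.2 hx) (Set.mem_Ici.2 (by positivity : 0 ≤ (1 + δ) * x))
    (sub_nonneg.2 ((div_le_one hδ).2 hμδ)) (by positivity : 0 ≤ μ / δ) (by ring)
  have heq : (1 - μ / δ) * x + μ / δ * ((1 + δ) * x) = (1 + μ) * x := by
    field_simp
    ring
  simp only [smul_eq_mul] at hc
  rw [heq] at hc
  nlinarith [mul_nonneg (div_nonneg hμ hδ.le) (h.nonneg hx)]

lemma map_two_pow_mul_le (h : IsOrliczFn φ) {K c δ v : ℝ} (hK : 1 ≤ K) (hc : 0 ≤ c)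
    (h2 : ∀ x, 0 ≤ x → φ x ≤ δ → φ (2 * x) ≤ K * φ x + c) (hv : 0 ≤ v) :
    ∀ m : ℕ, K ^ m * (φ v + m * c) ≤ δ → φ (2 ^ m * v) ≤ K ^ m * (φ v + m * c)
  | 0 => by simp
  | m + 1 => fun hm => by
    have hφv := h.nonneg hv
    have hmono : K ^ m * (φ v + m * c) ≤ K ^ (m + 1) * (φ v + (m + 1 : ℕ) * c) := by
      push_cast
      exact mul_le_mul (pow_le_pow_right₀ hK m.le_succ) (by linarith) (by positivity)
        (by positivity)
    have ih := map_two_pow_mul_le h hK hc h2 hv m (hmono.trans hm)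
    have hcK : c ≤ K ^ (m + 1) * c := le_mul_of_one_le_left hc (one_le_pow₀ hK)
    calc φ (2 ^ (m + 1) * v) = φ (2 * (2 ^ m * v)) := by ring_nf
      _ ≤ K * φ (2 ^ m * v) + c := h2 _ (by positivity) (ih.trans (hmono.trans hm))
      _ ≤ K * (K ^ m * (φ v + m * c)) + c := by gcongr
      _ ≤ K ^ (m + 1) * (φ v + (m + 1 : ℕ) * c) := by
        push_cast
        rw [pow_succ] at hcK ⊢
        nlinarith

lemma eventually_map_div_le (h : IsOrliczFn φ) {γ ε : ℝ} (hγ : 0 < γ) (hε : 0 < ε) :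
    ∀ᶠ η in 𝓝[>] 0, ∀ v, 0 ≤ v → φ v ≤ η → φ (v / ε) ≤ γ := by
  have hcont : Tendsto φ (𝓝[≥] 0) (𝓝 0) := by
    simpa only [h.map_zero] using (h.continuousOn 0 Set.self_mem_Ici).tendsto
  obtain ⟨b, hb0, hb⟩ := mem_nhdsGE_iff_exists_Icc_subset.1 (hcont.eventually_lt_const hγ)
  filter_upwards [Ioo_mem_nhdsGT (h.pos (ε * b) (by positivity))] with η hη v hv hvη
  have hvb : v ≤ ε * b := by
    by_contra! hlt
    linarith [h.mono (by positivity) hlt.le, hη.2]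
  exact (hb ⟨div_nonneg hv hε.le, (div_le_iff₀' hε).2 hvb⟩).le

/-- The pointwise estimate behind condition (*) + δ₂: for `φ u ≤ δ` use δ₂ at `u`, otherwise
`φ ((1 + δs) u) ≤ 1 ≤ φ u / δ`. -/
lemma map_one_add_mul_le_of_delta2 (h : IsOrliczFn φ) {K δ c δs μ u : ℝ} (hK : 0 ≤ K)
    (hδ : 0 < δ) (hc : 0 ≤ c) (hδs : 0 < δs) (h2 : ∀ x, 0 ≤ x → φ x ≤ δ → φ (2 * x) ≤ K * φ x + c)
    (hu : 0 ≤ u) (hstar : φ ((1 + δs) * u) ≤ 1) (hμ0 : 0 ≤ μ) (hμ1 : μ ≤ 1) (hμδs : μ ≤ δs) :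
    φ ((1 + μ) * u) ≤ (1 + μ * (K + 1 / (δ * δs))) * φ u + μ * c := by
  have hφu := h.nonneg hu
  have hextra : 0 ≤ μ * (1 / (δ * δs)) * φ u := by positivity
  by_cases hsmall : φ u ≤ δ
  · have h1 := h.map_one_add_mul_le hu one_pos hμ0 hμ1
    rw [div_one, one_add_one_eq_two] at h1
    nlinarith [mul_le_mul_of_nonneg_left (h2 u hu hsmall) hμ0]
  · push Not at hsmall
    have h1 := h.map_one_add_mul_le hu hδs hμ0 hμδs
    have hlarge : μ / δs * φ ((1 + δs) * u) ≤ μ * (1 / (δ * δs)) * φ u :=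
      calc μ / δs * φ ((1 + δs) * u) ≤ μ / δs * (φ u / δ) := by
            gcongr
            exact hstar.trans ((one_le_div hδ).2 hsmall.le)
        _ = μ * (1 / (δ * δs)) * φ u := by field_simp
    nlinarith [mul_nonneg (mul_nonneg hμ0 hK) hφu, mul_nonneg hμ0 hc]

end IsOrliczFn

namespace IsMusielakOrlicz

open Finset

variable {Φ : ℕ → ℝ → ℝ}

lemma exists_sum_map_one_add_mul_le_one (hΦ : IsMusielakOrlicz Φ) (hδ : MOCondDelta2 Φ)
    (hstar : MOCondStar Φ) {ε : ℝ} (hε0 : 0 < ε) (hε1 : ε < 1) :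
    ∃ μ > 0, ∀ u : ℕ → ℝ, (∀ n, 0 ≤ u n) → (∀ F : Finset ℕ, ∑ n ∈ F, Φ n (u n) ≤ 1 - ε) →
      ∀ F : Finset ℕ, ∑ n ∈ F, Φ n ((1 + μ) * u n) ≤ 1 := by
  obtain ⟨K, hK, δ, hδ, c, hc0, hcs, h2⟩ := hδ
  obtain ⟨δs, hδs, hstar⟩ := hstar (ε / 2) ⟨by linarith, by linarith⟩
  set L := K + 1 / (δ * δs)
  set C := ∑' n, c n
  have hL : 0 < L := by positivity
  have hC : 0 ≤ C := tsum_nonneg hc0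
  refine ⟨min (min 1 δs) (ε / (L + C)), by positivity, fun u hu hsum F => ?_⟩
  set μ := min (min 1 δs) (ε / (L + C))
  have hμ0 : 0 ≤ μ := by positivity
  have hμε : μ * (L + C) ≤ ε := (le_div_iff₀ (by positivity)).1 (min_le_right _ _)
  have hterm : ∀ n, Φ n ((1 + μ) * u n) ≤ (1 + μ * L) * Φ n (u n) + μ * c n := fun n =>
    (hΦ n).map_one_add_mul_le_of_delta2 hK.le hδ (hc0 n) hδs (h2 n) (hu n)
      (hstar n (u n) (hu n) (by linarith [show Φ n (u n) ≤ 1 - ε by simpa using hsum {n}]))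
      hμ0 ((min_le_left _ _).trans (min_le_left _ _))
      ((min_le_left _ _).trans (min_le_right _ _))
  calc ∑ n ∈ F, Φ n ((1 + μ) * u n)
      ≤ ∑ n ∈ F, ((1 + μ * L) * Φ n (u n) + μ * c n) := sum_le_sum fun n _ => hterm n
    _ = (1 + μ * L) * ∑ n ∈ F, Φ n (u n) + μ * ∑ n ∈ F, c n := by
      rw [sum_add_distrib, mul_sum, mul_sum]
    _ ≤ (1 + μ * L) * (1 - ε) + μ * C := by
      gcongr
      exacts [hsum F, hcs.sum_le_tsum F fun n _ => hc0 n]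
    _ ≤ 1 := by nlinarith [mul_nonneg (mul_nonneg hμ0 hL.le) hε0.le]

/-- Iterate δ₂ `m` times, `2 ^ m ≥ 1 / ε`, on the rows where `c n` is small, and use continuity
at `0` of the finitely many remaining `Φ n`. -/
lemma exists_sum_map_div_le_one (hΦ : IsMusielakOrlicz Φ) (hδ : MOCondDelta2 Φ) {ε : ℝ}
    (hε : 0 < ε) :
    ∃ η > 0, ∀ v : ℕ → ℝ, (∀ n, 0 ≤ v n) → (∀ F : Finset ℕ, ∑ n ∈ F, Φ n (v n) ≤ η) →
      ∀ F : Finset ℕ, ∑ n ∈ F, Φ n (v n / ε) ≤ 1 := by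
  obtain ⟨K, -, δ, hδ, c, hc0, hcs, h2⟩ := hδ
  set K1 := max K 1
  have hK1 : 1 ≤ K1 := le_max_right _ _
  have h2' : ∀ n x, 0 ≤ x → Φ n x ≤ δ → Φ n (2 * x) ≤ K1 * Φ n x + c n := fun n x hx hxδ =>
    (h2 n x hx hxδ).trans (by gcongr; exacts [(hΦ n).nonneg hx, le_max_left _ _])
  obtain ⟨m, hm⟩ := pow_unbounded_of_one_lt (1 / ε) one_lt_two
  set M := K1 ^ m
  have hM : 0 < M := by positivity
  set θ := min (δ / 2) (1 / 4)
  have hθ : 0 < θ := by positivity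
  set τ := θ / (M * (m + 1))
  have hMτ : ∀ s, 0 ≤ s → s < τ → M * (m * s) ≤ θ := fun s hs hsτ => by
    have := (lt_div_iff₀ (by positivity)).1 hsτ
    nlinarith [mul_nonneg hM.le hs]
  obtain ⟨B, hB⟩ := summable_iff_vanishing.1 hcs (Set.Iio τ) (Iio_mem_nhds (by positivity))
  obtain ⟨η, hη0, hηM, hηB⟩ : ∃ η, 0 < η ∧ M * η ≤ θ ∧ ∀ n ∈ B, ∀ v, 0 ≤ v →
      Φ n v ≤ η → Φ n (v / ε) ≤ 1 / (2 * (#B + 1)) := by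
    have hηM : ∀ᶠ η in 𝓝[>] (0 : ℝ), M * η ≤ θ := by
      filter_upwards [Ioo_mem_nhdsGT (show 0 < θ / M by positivity)] with η hη
      exact ((lt_div_iff₀' hM).1 hη.2).le
    exact (eventually_mem_nhdsWithin.and (hηM.and ((eventually_all_finset B).2 fun n _ =>
      (hΦ n).eventually_map_div_le (by positivity) hε))).exists
  refine ⟨η, hη0, fun v hv hsum F => ?_⟩
  have hvη : ∀ n, Φ n (v n) ≤ η := fun n => by simpa using hsum {n}
  have hin : ∑ n ∈ F ∩ B, Φ n (v n / ε) ≤ 1 / 2 := by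
    have hcard : (#(F ∩ B) : ℝ) ≤ #B := by exact_mod_cast card_le_card inter_subset_right
    calc ∑ n ∈ F ∩ B, Φ n (v n / ε) ≤ #(F ∩ B) • (1 / (2 * (#B + 1))) :=
          sum_le_card_nsmul _ _ _ fun n hn => hηB n (mem_inter.1 hn).2 _ (hv n) (hvη n)
      _ ≤ 1 / 2 := by
        rw [nsmul_eq_mul, mul_one_div, div_le_iff₀ (by positivity)]
        linarith
  have hout : ∑ n ∈ F \ B, Φ n (v n / ε) ≤ 1 / 2 := by
    have hpt : ∀ n ∉ B, Φ n (v n / ε) ≤ M * Φ n (v n) + M * (m * c n) := fun n hn => by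
      have hcn : c n < τ := by simpa using hB {n} (disjoint_singleton_left.2 hn)
      have hsmall : M * (Φ n (v n) + m * c n) ≤ δ := by
        have := hMτ _ (hc0 n) hcn
        have : M * Φ n (v n) ≤ θ := hηM.trans' (by gcongr; exact hvη n)
        linarith [min_le_left (δ / 2) (1 / 4)]
      calc Φ n (v n / ε) ≤ Φ n (2 ^ m * v n) := by
            refine (hΦ n).mono (div_nonneg (hv n) hε.le) ?_
            rw [div_eq_mul_one_div, mul_comm]
            exact mul_le_mul_of_nonneg_right hm.le (hv n)
        _ ≤ M * (Φ n (v n) + m * c n) :=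
            (hΦ n).map_two_pow_mul_le hK1 (hc0 n) (h2' n) (hv n) m hsmall
        _ = M * Φ n (v n) + M * (m * c n) := mul_add _ _ _
    calc ∑ n ∈ F \ B, Φ n (v n / ε)
        ≤ ∑ n ∈ F \ B, (M * Φ n (v n) + M * (m * c n)) :=
          sum_le_sum fun n hn => hpt n (mem_sdiff.1 hn).2
      _ = M * ∑ n ∈ F \ B, Φ n (v n) + M * (m * ∑ n ∈ F \ B, c n) := by
          rw [sum_add_distrib, ← mul_sum, ← mul_sum, ← mul_sum]
      _ ≤ θ + θ := add_le_add (hηM.trans' (by gcongr; exact hsum _))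
          (hMτ _ (sum_nonneg fun n _ => hc0 n) (by simpa using hB _ sdiff_disjoint))
      _ ≤ 1 / 2 := by linarith [min_le_right (δ / 2) (1 / 4)]
  rw [← sum_inter_add_sum_sdiff F B]
  linarith

lemma sum_le_one_sub_of_le_sum (hΦ : IsMusielakOrlicz Φ) {u w : ℕ → ℝ} (hu : ∀ n, 0 ≤ u n)
    (hw : ∀ n, 0 ≤ w n) {F₀ : Finset ℕ} {η : ℝ} (hη : η ≤ ∑ n ∈ F₀, Φ n (w n))
    (h : ∀ F : Finset ℕ, ∑ n ∈ F, Φ n (u n + w n) ≤ 1) (F : Finset ℕ) :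
    ∑ n ∈ F, Φ n (u n) ≤ 1 - η := by
  have hsup := sum_le_sum fun n (_ : n ∈ F ∪ F₀) => (hΦ n).add_le_map_add (hu n) (hw n)
  rw [sum_add_distrib] at hsup
  have hF := sum_le_sum_of_subset_of_nonneg (subset_union_left (s₁ := F) (s₂ := F₀))
    fun n _ _ => (hΦ n).nonneg (hu n)
  have hF₀ := sum_le_sum_of_subset_of_nonneg (subset_union_right (s₁ := F) (s₂ := F₀))
    fun n _ _ => (hΦ n).nonneg (hw n)
  linarith [h (F ∪ F₀)]

end IsMusielakOrlicz

section SequenceSpace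

variable {X : Type*} [NormedAddCommGroup X] {Φ : ℕ → ℝ → ℝ} {a : ℕ → ℕ → ℝ} {x y : ℕ → X}

lemma rowSum_nonneg (a : ℕ → ℕ → ℝ) (x : ℕ → X) (n : ℕ) : 0 ≤ rowSum a x n :=
  tsum_nonneg fun _ => by positivity

lemma rowSum_add_of_nonneg [LE X] (hAL : ∀ u v : X, 0 ≤ u → 0 ≤ v → ‖u + v‖ = ‖u‖ + ‖v‖)
    (hx0 : ∀ k, 0 ≤ x k) (hy0 : ∀ k, 0 ≤ y k) (hx : ∀ n, Summable fun k => |a n k| * ‖x k‖)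
    (hy : ∀ n, Summable fun k => |a n k| * ‖y k‖) (n : ℕ) :
    rowSum a (x + y) n = rowSum a x n + rowSum a y n := by
  simp only [rowSum, Pi.add_apply, hAL _ _ (hx0 _) (hy0 _), mul_add]
  exact (hx n).tsum_add (hy n)

lemma MemL.add (hΦ : IsMusielakOrlicz Φ) (hx : MemL Φ a x) (hy : MemL Φ a y) :
    MemL Φ a (x + y) := by
  obtain ⟨⟨Cx, hCx⟩, hxs, σx, hσx, hσxs⟩ := hx
  obtain ⟨⟨Cy, hCy⟩, hys, σy, hσy, hσys⟩ := hy
  have hle : ∀ n k, |a n k| * ‖(x + y) k‖ ≤ |a n k| * ‖x k‖ + |a n k| * ‖y k‖ := fun n k => by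
    rw [← mul_add]
    exact mul_le_mul_of_nonneg_left (norm_add_le _ _) (abs_nonneg _)
  have hxys : ∀ n, Summable fun k => |a n k| * ‖(x + y) k‖ := fun n =>
    ((hxs n).add (hys n)).of_nonneg_of_le (fun _ => by positivity) (hle n)
  have hrow : ∀ n, rowSum a (x + y) n ≤ rowSum a x n + rowSum a y n := fun n =>
    (hxs n).tsum_add (hys n) ▸ (hxys n).tsum_le_tsum (hle n) ((hxs n).add (hys n))
  refine ⟨⟨Cx + Cy, fun k => (norm_add_le _ _).trans (add_le_add (hCx k) (hCy k))⟩, hxys,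
    σx + σy, by positivity, ?_⟩
  refine ((hσxs.mul_left (σx / (σx + σy))).add (hσys.mul_left (σy / (σx + σy)))).of_nonneg_of_le
    (fun n => (hΦ n).nonneg (div_nonneg (rowSum_nonneg a _ n) (by positivity))) fun n => ?_
  calc Φ n (rowSum a (x + y) n / (σx + σy))
      ≤ Φ n ((rowSum a x n + rowSum a y n) / (σx + σy)) :=
        (hΦ n).mono (div_nonneg (rowSum_nonneg a _ n) (by positivity)) (by gcongr; exact hrow n)
    _ ≤ _ := (hΦ n).map_add_div_add_le (rowSum_nonneg a x n) (rowSum_nonneg a y n) hσx hσy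

variable (Φ a) in
def ANormSet (x : ℕ → X) : Set ℝ :=
  {σ : ℝ | 0 < σ ∧ (Summable fun n => Φ n (rowSum a x n / σ)) ∧
    (∑' n, Φ n (rowSum a x n / σ)) ≤ 1}

lemma bddBelow_ANormSet : BddBelow (ANormSet Φ a x) := ⟨0, fun _ hσ => hσ.1.le⟩

lemma mem_ANormSet_iff (hΦ : IsMusielakOrlicz Φ) {σ : ℝ} :
    σ ∈ ANormSet Φ a x ↔ 0 < σ ∧ ∀ F : Finset ℕ, ∑ n ∈ F, Φ n (rowSum a x n / σ) ≤ 1 := by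
  have hnn : 0 < σ → 0 ≤ fun n => Φ n (rowSum a x n / σ) := fun hσ n =>
    (hΦ n).nonneg (div_nonneg (rowSum_nonneg a x n) hσ.le)
  refine ⟨fun ⟨hσ, hs, hle⟩ => ⟨hσ, fun F => (hs.sum_le_tsum F fun n _ => hnn hσ n).trans hle⟩,
    fun ⟨hσ, h⟩ => ⟨hσ, summable_of_sum_le (hnn hσ) h, Real.tsum_le_of_sum_le (hnn hσ) h⟩⟩

lemma ANorm_le_of_forall_sum_le (hΦ : IsMusielakOrlicz Φ) {σ : ℝ} (hσ : 0 < σ)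
    (h : ∀ F : Finset ℕ, ∑ n ∈ F, Φ n (rowSum a x n / σ) ≤ 1) : ANorm Φ a x ≤ σ :=
  csInf_le bddBelow_ANormSet ((mem_ANormSet_iff hΦ).2 ⟨hσ, h⟩)

lemma MemL.nonempty_ANormSet (hΦ : IsMusielakOrlicz Φ) (hx : MemL Φ a x) :
    (ANormSet Φ a x).Nonempty := by
  obtain ⟨-, -, σ, hσ, hs⟩ := hx
  set M := max (∑' n, Φ n (rowSum a x n / σ)) 1
  have hM : 1 ≤ M := le_max_right _ _
  refine ⟨σ * M, (mem_ANormSet_iff hΦ).2 ⟨by positivity, fun F => ?_⟩⟩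
  calc ∑ n ∈ F, Φ n (rowSum a x n / (σ * M))
      ≤ ∑ n ∈ F, M⁻¹ * Φ n (rowSum a x n / σ) := Finset.sum_le_sum fun n _ => by
        rw [← div_div, div_eq_inv_mul (rowSum a x n / σ)]
        exact (hΦ n).map_mul_le (by positivity) (inv_le_one_of_one_le₀ hM)
          (div_nonneg (rowSum_nonneg a x n) hσ.le)
    _ = M⁻¹ * ∑ n ∈ F, Φ n (rowSum a x n / σ) := (Finset.mul_sum _ _ _).symm
    _ ≤ M⁻¹ * M := by
      gcongr
      exact (hs.sum_le_tsum F fun n _ => (hΦ n).nonneg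
        (div_nonneg (rowSum_nonneg a x n) hσ.le)).trans (le_max_left _ _)
    _ = 1 := inv_mul_cancel₀ (by positivity)

lemma MemL.exists_lt_of_ANorm_lt (hΦ : IsMusielakOrlicz Φ) (hx : MemL Φ a x) {t : ℝ}
    (h : ANorm Φ a x < t) :
    ∃ σ, 0 < σ ∧ σ < t ∧ ∀ F : Finset ℕ, ∑ n ∈ F, Φ n (rowSum a x n / σ) ≤ 1 := by
  obtain ⟨σ, hσ, hσt⟩ := (csInf_lt_iff bddBelow_ANormSet (hx.nonempty_ANormSet hΦ)).1 h
  obtain ⟨hσ0, hσ⟩ := (mem_ANormSet_iff hΦ).1 hσ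
  exact ⟨σ, hσ0, hσt, hσ⟩

end SequenceSpace

theorem lPhiA_uniformly_monotone_general
    {X : Type*} [NormedAddCommGroup X] [Lattice X]
    (hAL : ∀ u v : X, 0 ≤ u → 0 ≤ v → ‖u + v‖ = ‖u‖ + ‖v‖)
    (Φ : ℕ → ℝ → ℝ) (hΦ : IsMusielakOrlicz Φ) (hδ : MOCondDelta2 Φ)
    (hstar : MOCondStar Φ)
    (a : ℕ → ℕ → ℝ) :
    ∀ ε > (0 : ℝ), ∃ μ > (0 : ℝ),
      ∀ x y : ℕ → X, MemL Φ a x → MemL Φ a y →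
        (∀ k, 0 ≤ x k) → (∀ k, 0 ≤ y k) →
        ANorm Φ a x = 1 → ε ≤ ANorm Φ a y →
        1 + μ ≤ ANorm Φ a (x + y) := by
  intro ε hε
  obtain ⟨η, hη, hsmall⟩ := hΦ.exists_sum_map_div_le_one hδ (by positivity : 0 < ε / 4)
  obtain ⟨μ, hμ, hdil⟩ := hΦ.exists_sum_map_one_add_mul_le_one hδ hstar
    (by positivity : 0 < min η (1 / 2)) ((min_le_right _ _).trans_lt (by norm_num))
  refine ⟨min (μ / 2) 1, by positivity, fun x y hx hy hx0 hy0 hx1 hyε => ?_⟩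
  have hrx := rowSum_nonneg a x
  have hry := rowSum_nonneg a y
  -- otherwise `‖y‖ ≤ ε / 2`
  obtain ⟨F₀, hF₀⟩ : ∃ F₀ : Finset ℕ, η < ∑ n ∈ F₀, Φ n (rowSum a y n / 2) := by
    by_contra! h
    have hy2 := hsmall _ (fun n => div_nonneg (hry n) zero_le_two) h
    have : ANorm Φ a y ≤ ε / 2 := ANorm_le_of_forall_sum_le hΦ (by positivity) fun F => by
      simpa only [div_div, show 2 * (ε / 4) = ε / 2 by ring] using hy2 F
    linarith
  by_contra! hlt
  obtain ⟨σ, hσ0, hσlt, hσ⟩ := (hx.add hΦ hy).exists_lt_of_ANorm_lt hΦ hlt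
  have hσ2 : σ ≤ 2 := by linarith [min_le_right (μ / 2) 1]
  have hyσ : min η (1 / 2) ≤ ∑ n ∈ F₀, Φ n (rowSum a y n / σ) :=
    (min_le_left _ _).trans (hF₀.le.trans (Finset.sum_le_sum fun n _ =>
      (hΦ n).mono (div_nonneg (hry n) zero_le_two) (div_le_div_of_nonneg_left (hry n) hσ0 hσ2)))
  have hxyσ : ∀ F : Finset ℕ, ∑ n ∈ F, Φ n (rowSum a x n / σ + rowSum a y n / σ) ≤ 1 := by
    simpa only [rowSum_add_of_nonneg hAL hx0 hy0 hx.2.1 hy.2.1, add_div] using hσ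
  have hxσ := hΦ.sum_le_one_sub_of_le_sum (fun n => div_nonneg (hrx n) hσ0.le)
    (fun n => div_nonneg (hry n) hσ0.le) hyσ hxyσ
  have : ANorm Φ a x ≤ σ / (1 + μ) := ANorm_le_of_forall_sum_le hΦ (by positivity) fun F => by
    simpa only [div_div_eq_mul_div, mul_div_assoc, mul_comm _ (1 + μ)] using
      hdil _ (fun n => div_nonneg (hrx n) hσ0.le) hxσ F
  rw [hx1, le_div_iff₀ (by positivity)] at this
  linarith [min_le_left (μ / 2) 1]

/-- if `A ∈ 𝒜`, `X` is an AL-space and `Φ ∈ δ₂` satisfies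
condition (*), then `l_Φ^A(X)` is uniformly monotone. -/
theorem lPhiA_uniformly_monotone
    {X : Type*} [NormedAddCommGroup X] [Lattice X] [HasSolidNorm X]
    [IsOrderedAddMonoid X] [NormedSpace ℝ X] [CompleteSpace X]
    (hAL : ∀ u v : X, 0 ≤ u → 0 ≤ v → ‖u + v‖ = ‖u‖ + ‖v‖)
    (Φ : ℕ → ℝ → ℝ) (hΦ : IsMusielakOrlicz Φ) (hδ : MOCondDelta2 Φ)
    (hstar : MOCondStar Φ)
    (a : ℕ → ℕ → ℝ) (hA : MatrixClassA a) :
    ∀ ε > (0 : ℝ), ∃ μ > (0 : ℝ),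
      ∀ x y : ℕ → X, MemL Φ a x → MemL Φ a y →
        (∀ k, 0 ≤ x k) → (∀ k, 0 ≤ y k) →
        ANorm Φ a x = 1 → ε ≤ ANorm Φ a y →
        1 + μ ≤ ANorm Φ a (x + y) :=
  lPhiA_uniformly_monotone_general hAL Φ hΦ hδ hstar a
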